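/- arXiv:1312.4227 — 4 statements merged into one kernel-verified Lean document; each statement's English description precedes it below -/
import Mathlib

section
/- Let φ₁ and φ₂ be continuous probability densities on ℝ, positive exactly on open intervals I₁ and I₂, with CDFs F₁ and F₂, and set K := F₂⁻¹ ∘ F₁ on I₁. Then K is differentiable at every x ∈ I₁ with K'(x) = φ₁(x)/φ₂(K(x)); that is, K is a solution of the initial value problem K'(x) = φ₁(x)/φ₂(K(x)) with K(x) → inf I₂ as x → inf I₁. -/
/-!
Near `x ∈ I₁` the identity `F₂ ∘ K = F₁` holds, `F₁' = φ₁ > 0` and `F₂' = φ₂ > 0` at `K x`.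
Since `F₂` is monotone and strictly increasing at `K x`, `K` is continuous at `x`; dividing
difference quotients, `slope F₁ = slope (F₂ ∘ K) = (slope F₂ ∘ K) · slope K`, gives
`K' = φ₁ / φ₂ ∘ K`. At the left end, `F₁ x → 0` as `x ↓ inf I₁` because `φ₁` vanishes below
`I₁`, while `F₂ y > 0` for every `y ∈ I₂`; hence eventually `F₂ (K x) = F₁ x < F₂ y`, i.e.
`K x < y`.
-/

open MeasureTheory Set Filter

/-- The cumulative distribution function of a density `φ` (w.r.t. Lebesgue measure). -/
noncomputable def cdfOf (φ : ℝ → ℝ) (x : ℝ) : ℝ := ∫ t in Set.Iic x, φ t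

open Topology

section OrderTopology

theorem continuousAt_of_monotone_comp_eventuallyEq {α β γ : Type*} [LinearOrder α]
    [TopologicalSpace α] [OrderTopology α] [LinearOrder β] [TopologicalSpace β]
    [OrderTopology β] [TopologicalSpace γ] {F : α → β} {G : γ → β} {K : γ → α} {x : γ}
    (hF : Monotone F) (hlt : ∀ u < K x, F u < F (K x)) (hgt : ∀ v > K x, F (K x) < F v)
    (hG : ContinuousAt G x) (heq : F ∘ K =ᶠ[𝓝 x] G) : ContinuousAt K x := by
  have hGx : F (K x) = G x := heq.eq_of_nhds
  refine tendsto_order.2 ⟨fun u hu => ?_, fun v hv => ?_⟩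
  · filter_upwards [hG.eventually (lt_mem_nhds (hGx ▸ hlt u hu)), heq] with y hy hyK
    exact hF.reflect_lt (hy.trans_eq hyK.symm)
  · filter_upwards [hG.eventually (gt_mem_nhds (hGx ▸ hgt v hv)), heq] with y hy hyK
    exact hF.reflect_lt (hyK.trans_lt hy)

theorem tendsto_sInf_of_forall_eventually_le {α β : Type*} [CompleteLinearOrder α]
    [TopologicalSpace α] [OrderTopology α] {f : β → α} {l : Filter β} {S : Set α}
    (hmem : ∀ᶠ b in l, f b ∈ S) (hle : ∀ y ∈ S, ∀ᶠ b in l, f b ≤ y) :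
    Tendsto f l (𝓝 (sInf S)) := by
  refine tendsto_order.2 ⟨fun a ha => hmem.mono fun b hb => ha.trans_le (sInf_le hb),
    fun a ha => ?_⟩
  obtain ⟨y, hyS, hya⟩ := sInf_lt_iff.1 ha
  exact (hle y hyS).mono fun b hb => hb.trans_lt hya

end OrderTopology

theorem hasDerivAt_of_comp_eventuallyEq {F G K : ℝ → ℝ} {x f' g' : ℝ}
    (hK : ContinuousAt K x) (hF : HasDerivAt F f' (K x)) (hf' : f' ≠ 0)
    (hG : HasDerivAt G g' x) (hg' : g' ≠ 0) (heq : F ∘ K =ᶠ[𝓝 x] G) :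
    HasDerivAt K (g' / f') x := by
  have hGx : F (K x) = G x := heq.eq_of_nhds
  have heq' : F ∘ K =ᶠ[𝓝[≠] x] G := nhdsWithin_le_nhds heq
  have hGne : ∀ᶠ y in 𝓝[≠] x, G y ≠ G x := hG.eventually_ne hg'
  have hKne : Tendsto K (𝓝[≠] x) (𝓝[≠] (K x)) := by
    refine tendsto_nhdsWithin_iff.2 ⟨hK.mono_left nhdsWithin_le_nhds, ?_⟩
    filter_upwards [hGne, heq'] with y hy hyK hKy
    exact hy (by rw [← hyK, Function.comp_apply, mem_singleton_iff.1 hKy, hGx])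
  rw [hasDerivAt_iff_tendsto_slope] at hG hF ⊢
  refine (hG.div (hF.comp hKne) hf').congr' ?_
  filter_upwards [hGne, heq', self_mem_nhdsWithin] with y hy hyK hyx
  have hFK : F (K y) - F (K x) ≠ 0 := by
    rw [Function.comp_apply] at hyK
    rwa [sub_ne_zero, hyK, hGx]
  have hKy : K y - K x ≠ 0 := fun h => hFK (by rw [sub_eq_zero.1 h, sub_self])
  have hyx : y - x ≠ 0 := sub_ne_zero.2 hyx
  simp only [Pi.div_apply, Function.comp_apply, slope_def_field] at hyK ⊢
  rw [← hyK, ← hGx]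
  field_simp

section Cdf

variable {φ : ℝ → ℝ}

theorem cdfOf_sub_cdfOf (hi : Integrable φ) (a b : ℝ) :
    cdfOf φ b - cdfOf φ a = ∫ t in a..b, φ t :=
  intervalIntegral.integral_Iic_sub_Iic hi.integrableOn hi.integrableOn

theorem cdfOf_hasDerivAt (hc : Continuous φ) (hi : Integrable φ) (x : ℝ) :
    HasDerivAt (cdfOf φ) (φ x) x := by
  have h : cdfOf φ = fun u => cdfOf φ x + ∫ t in x..u, φ t :=
    funext fun u => by rw [← cdfOf_sub_cdfOf hi]; ring
  rw [h]
  exact (hc.integral_hasStrictDerivAt x x).hasDerivAt.const_add _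

theorem cdfOf_nonneg (hnn : ∀ x, 0 ≤ φ x) (x : ℝ) : 0 ≤ cdfOf φ x :=
  setIntegral_nonneg measurableSet_Iic fun t _ => hnn t

theorem cdfOf_mono (hnn : ∀ x, 0 ≤ φ x) (hi : Integrable φ) : Monotone (cdfOf φ) :=
  fun _ _ hab => setIntegral_mono_set hi.integrableOn (Eventually.of_forall hnn)
    (Iic_subset_Iic.2 hab).eventuallyLE

theorem cdfOf_lt_cdfOf (hc : Continuous φ) (hnn : ∀ x, 0 ≤ φ x) (hi : Integrable φ)
    {a b : ℝ} (hab : a < b) (hpos : ∃ c ∈ Icc a b, 0 < φ c) : cdfOf φ a < cdfOf φ b := by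
  rw [← sub_pos, cdfOf_sub_cdfOf hi]
  exact intervalIntegral.integral_pos hab hc.continuousOn (fun x _ => hnn x) hpos

theorem cdfOf_pos (hc : Continuous φ) (hnn : ∀ x, 0 ≤ φ x) (hi : Integrable φ) {y : ℝ}
    (hy : 0 < φ y) : 0 < cdfOf φ y :=
  (cdfOf_nonneg hnn (y - 1)).trans_lt
    (cdfOf_lt_cdfOf hc hnn hi (sub_one_lt y) ⟨y, right_mem_Icc.2 (sub_one_lt y).le, hy⟩)

theorem cdfOf_eq_zero_of_support_subset {I : Set ℝ} (hsupp : Function.support φ ⊆ I)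
    {a : ℝ} (ha : ∀ t ∈ I, a ≤ t) : cdfOf φ a = 0 := by
  rw [cdfOf, integral_Iic_eq_integral_Iio]
  refine setIntegral_eq_zero_of_forall_eq_zero fun t ht => ?_
  by_contra h
  exact (not_le.2 ht) (ha t (hsupp h))

theorem tendsto_cdfOf_sInf_zero (hc : Continuous φ) (hi : Integrable φ) {I : Set ℝ}
    (hsupp : Function.support φ ⊆ I) :
    Tendsto (cdfOf φ)
      (comap ((↑) : ℝ → EReal) (𝓝 (sInf (((↑) : ℝ → EReal) '' I))) ⊓ 𝓟 I) (𝓝 0) := by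
  have hle : ∀ t ∈ I, sInf (((↑) : ℝ → EReal) '' I) ≤ t := fun t ht => sInf_le ⟨t, ht, rfl⟩
  generalize sInf (((↑) : ℝ → EReal) '' I) = m at hle ⊢
  induction m using EReal.rec with
  | bot =>
    exact (tendsto_integral_Iic_zero (EReal.tendsto_coe_nhds_bot_iff.1 tendsto_comap)).mono_left
      inf_le_left
  | coe a =>
    have hFa : cdfOf φ a = 0 :=
      cdfOf_eq_zero_of_support_subset hsupp fun t ht => EReal.coe_le_coe_iff.1 (hle t ht)
    rw [← EReal.isEmbedding_coe.nhds_eq_comap, ← hFa]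
    exact (cdfOf_hasDerivAt hc hi a).continuousAt.tendsto.mono_left inf_le_left
  | top =>
    have hI : I = ∅ := eq_empty_of_forall_notMem fun t ht =>
      (hle t ht).not_gt (EReal.coe_lt_top t)
    simp [hI]

end Cdf

theorem stmt1_general
    (φ₁ φ₂ : ℝ → ℝ) (I₁ I₂ : Set ℝ)
    (hφ₁c : Continuous φ₁) (hφ₂c : Continuous φ₂)
    (hφ₁nn : ∀ x, 0 ≤ φ₁ x) (hφ₂nn : ∀ x, 0 ≤ φ₂ x)
    (hφ₁i : Integrable φ₁) (hφ₂i : Integrable φ₂)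
    (hI₁o : IsOpen I₁)
    (hpos₁ : ∀ x, 0 < φ₁ x ↔ x ∈ I₁)
    (hpos₂ : ∀ x, 0 < φ₂ x ↔ x ∈ I₂)
    (K : ℝ → ℝ)
    (hK : ∀ x ∈ I₁, K x ∈ I₂ ∧ cdfOf φ₂ (K x) = cdfOf φ₁ x) :
    (∀ x ∈ I₁, HasDerivAt K (φ₁ x / φ₂ (K x)) x) ∧
      Tendsto (fun x : ℝ => (K x : EReal))
        ((Filter.comap (fun x : ℝ => (x : EReal))
            (nhds (sInf ((fun x : ℝ => (x : EReal)) '' I₁)))) ⊓ Filter.principal I₁)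
        (nhds (sInf ((fun x : ℝ => (x : EReal)) '' I₂))) := by
  have hmono₂ := cdfOf_mono hφ₂nn hφ₂i
  refine ⟨fun x hx => ?_, ?_⟩
  · have hφ₂K : 0 < φ₂ (K x) := (hpos₂ _).2 (hK x hx).1
    have heq : cdfOf φ₂ ∘ K =ᶠ[𝓝 x] cdfOf φ₁ :=
      eventually_of_mem (hI₁o.mem_nhds hx) fun y hy => (hK y hy).2
    have hKc : ContinuousAt K x :=
      continuousAt_of_monotone_comp_eventuallyEq hmono₂
        (fun u hu => cdfOf_lt_cdfOf hφ₂c hφ₂nn hφ₂i hu ⟨K x, right_mem_Icc.2 hu.le, hφ₂K⟩)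
        (fun v hv => cdfOf_lt_cdfOf hφ₂c hφ₂nn hφ₂i hv ⟨K x, left_mem_Icc.2 hv.le, hφ₂K⟩)
        (cdfOf_hasDerivAt hφ₁c hφ₁i x).continuousAt heq
    exact hasDerivAt_of_comp_eventuallyEq hKc (cdfOf_hasDerivAt hφ₂c hφ₂i (K x)) hφ₂K.ne'
      (cdfOf_hasDerivAt hφ₁c hφ₁i x) ((hpos₁ x).2 hx).ne' heq
  · have hF₁ := tendsto_cdfOf_sInf_zero hφ₁c hφ₁i (I := I₁)
      fun x hx => (hpos₁ x).1 ((hφ₁nn x).lt_of_ne' hx)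
    have hI₁ : ∀ᶠ x in comap ((↑) : ℝ → EReal) (𝓝 (sInf (((↑) : ℝ → EReal) '' I₁))) ⊓ 𝓟 I₁,
        x ∈ I₁ := mem_inf_of_right (mem_principal_self I₁)
    refine tendsto_sInf_of_forall_eventually_le (hI₁.mono fun x hx => ⟨K x, (hK x hx).1, rfl⟩) ?_
    rintro _ ⟨y, hy, rfl⟩
    filter_upwards [hF₁.eventually_lt_const (cdfOf_pos hφ₂c hφ₂nn hφ₂i ((hpos₂ y).2 hy)), hI₁]
      with x hxy hx
    rw [← (hK x hx).2] at hxy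
    exact EReal.coe_le_coe_iff.2 (hmono₂.reflect_lt hxy).le

/-- with continuous probability densities `φ₁`, `φ₂` positive exactly on open
intervals `I₁`, `I₂`, the binding map `K = F₂⁻¹ ∘ F₁` (characterized by `K x ∈ I₂` and
`F₂ (K x) = F₁ x` on `I₁`) is differentiable on `I₁` with `K' x = φ₁ x / φ₂ (K x)`, and it
satisfies the boundary condition `K x → inf I₂` as `x → inf I₁` (infima taken in `EReal`
to accommodate unbounded intervals). -/
theorem stmt1
    (φ₁ φ₂ : ℝ → ℝ) (I₁ I₂ : Set ℝ)
    (hφ₁c : Continuous φ₁) (hφ₂c : Continuous φ₂)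
    (hφ₁nn : ∀ x, 0 ≤ φ₁ x) (hφ₂nn : ∀ x, 0 ≤ φ₂ x)
    (hφ₁i : Integrable φ₁) (hφ₂i : Integrable φ₂)
    (hφ₁1 : ∫ x, φ₁ x = 1) (hφ₂1 : ∫ x, φ₂ x = 1)
    (hI₁o : IsOpen I₁) (hI₁conn : I₁.OrdConnected)
    (hI₂o : IsOpen I₂) (hI₂conn : I₂.OrdConnected)
    (hpos₁ : ∀ x, 0 < φ₁ x ↔ x ∈ I₁)
    (hpos₂ : ∀ x, 0 < φ₂ x ↔ x ∈ I₂)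
    (K : ℝ → ℝ)
    (hK : ∀ x ∈ I₁, K x ∈ I₂ ∧ cdfOf φ₂ (K x) = cdfOf φ₁ x) :
    (∀ x ∈ I₁, HasDerivAt K (φ₁ x / φ₂ (K x)) x) ∧
      Tendsto (fun x : ℝ => (K x : EReal))
        ((Filter.comap (fun x : ℝ => (x : EReal))
            (nhds (sInf ((fun x : ℝ => (x : EReal)) '' I₁)))) ⊓ Filter.principal I₁)
        (nhds (sInf ((fun x : ℝ => (x : EReal)) '' I₂))) :=
  stmt1_general φ₁ φ₂ I₁ I₂ hφ₁c hφ₂c hφ₁nn hφ₂nn hφ₁i hφ₂i hI₁o hpos₁ hpos₂ K hK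
end

section
/- Under the benchmark setup, assume additionally that I₁ is a bounded interval and that q is uniformly continuous. For each n ∈ ℕ let x₀⁽ⁿ⁾ < x₁⁽ⁿ⁾ < … < xₙ⁽ⁿ⁾ be the partition of the closure of I₁ determined by ∫_{x_k⁽ⁿ⁾}^{x_{k+1}⁽ⁿ⁾} φ₁(t) dt = 1/n for k = 0,…,n−1, and set y_k⁽ⁿ⁾ := K(x_k⁽ⁿ⁾). Then the values of the approximating finite portfolios converge to the portfolio value: lim_{n→∞} Σ_{k=0}^{n−1} ((x_{k+1}⁽ⁿ⁾ + x_k⁽ⁿ⁾)/2) · ∫_{y_k⁽ⁿ⁾}^{y_{k+1}⁽ⁿ⁾} q(y) dy = ∫_{I₁} x · (φ₁(x)/φ₂(K(x))) · q(K(x)) dx. -/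
/-!
`I₁` is an interval `(A, B)`. There `F₂ ∘ K = F₁`, and `F₂` is locally invertible at `K z` since
`F₂' = φ₂ > 0` there, so `K` is differentiable with `K' = φ₁ / φ₂ ∘ K ≥ 0`. With
`g := K' · (q ∘ K)` this gives `∫_{K u}^{K v} q = ∫_u^v g` on `[A, B]`, with `g` integrable, so the
`n`-th sum is the midpoint sum `Σ_k m_k ∫_{x_k}^{x_{k+1}} g`, which differs from `∫_A^B t g(t) dt`
by at most the mesh of the partition times `∫_A^B g`. Since `F₁ (x_k) = k / n` and `F₁` is
continuous and strictly increasing on the compact `[A, B]`, the mesh tends to `0`.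
-/

open MeasureTheory Set Filter

open Topology

theorem IsOpen.eq_Ioo_csInf_csSup {s : Set ℝ} (ho : IsOpen s) (hc : s.OrdConnected)
    (hb : Bornology.IsBounded s) (hne : s.Nonempty) : s = Ioo (sInf s) (sSup s) := by
  refine Subset.antisymm ?_ ((IsConnected.Ioo_csInf_csSup_subset ⟨hne, hc.isPreconnected⟩
    hb.bddBelow hb.bddAbove))
  calc s = interior s := ho.interior_eq.symm
    _ ⊆ interior (Icc (sInf s) (sSup s)) :=
      interior_mono (subset_Icc_csInf_csSup hb.bddBelow hb.bddAbove)
    _ = Ioo (sInf s) (sSup s) := interior_Icc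

theorem exists_eq_Ioo_of_pos_iff {φ : ℝ → ℝ} {I : Set ℝ} (hnn : ∀ x, 0 ≤ φ x)
    (h1 : ∫ x, φ x = 1) (hpos : ∀ x, 0 < φ x ↔ x ∈ I) (ho : IsOpen I) (hc : I.OrdConnected)
    (hb : Bornology.IsBounded I) : ∃ a b, a < b ∧ I = Ioo a b := by
  have hne : I.Nonempty := by
    by_contra hI
    have hzero : φ = 0 := funext fun x =>
      le_antisymm (not_lt.1 fun h => hI ⟨x, (hpos x).1 h⟩) (hnn x)
    simp [hzero] at h1
  have hI := ho.eq_Ioo_csInf_csSup hc hb hne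
  obtain ⟨t, ht⟩ := hne
  rw [hI] at ht
  exact ⟨_, _, ht.1.trans ht.2, hI⟩

section cdf

variable {φ : ℝ → ℝ}

theorem cdfOf_sub_cdfOf_eq_integral_Ioo (hi : Integrable φ) {a b : ℝ} (hab : a ≤ b) :
    cdfOf φ b - cdfOf φ a = ∫ t in Ioo a b, φ t := by
  rw [cdfOf_sub_cdfOf hi, intervalIntegral.integral_of_le hab, integral_Ioc_eq_integral_Ioo]

theorem hasStrictDerivAt_cdfOf (hc : Continuous φ) (hi : Integrable φ) (z : ℝ) :
    HasStrictDerivAt (cdfOf φ) (φ z) z := by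
  have hprim : cdfOf φ = fun y => cdfOf φ 0 + ∫ t in (0 : ℝ)..y, φ t := by
    ext y
    rw [← cdfOf_sub_cdfOf hi, add_sub_cancel]
  rw [hprim]
  exact (hc.integral_hasStrictDerivAt 0 z).const_add _

theorem continuous_cdfOf (hc : Continuous φ) (hi : Integrable φ) : Continuous (cdfOf φ) :=
  continuous_iff_continuousAt.2 fun z => (hasStrictDerivAt_cdfOf hc hi z).hasDerivAt.continuousAt

theorem cdfOf_eq_zero {a : ℝ} (h : ∀ t ≤ a, φ t = 0) : cdfOf φ a = 0 :=
  setIntegral_eq_zero_of_forall_eq_zero h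

theorem cdfOf_eq_one (hi : Integrable φ) (h1 : ∫ x, φ x = 1) {b : ℝ}
    (h : ∀ t, b < t → φ t = 0) : cdfOf φ b = 1 := by
  have htail : ∫ t in Ioi b, φ t = 0 := setIntegral_eq_zero_of_forall_eq_zero h
  rw [← h1, ← intervalIntegral.integral_Iic_add_Ioi hi.integrableOn hi.integrableOn, htail,
    add_zero, cdfOf]

theorem strictMonoOn_cdfOf (hi : Integrable φ) {a b : ℝ} (hpos : ∀ t ∈ Ioo a b, 0 < φ t) :
    StrictMonoOn (cdfOf φ) (Icc a b) := fun u hu v hv huv => by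
  have := intervalIntegral.intervalIntegral_pos_of_pos_on hi.intervalIntegrable
    (fun t ht => hpos t ⟨hu.1.trans_lt ht.1, ht.2.trans_le hv.2⟩) huv
  linarith [cdfOf_sub_cdfOf hi u v]

end cdf

theorem apply_partition_eq {F : ℝ → ℝ} {a b : ℝ} {n : ℕ} {p : ℕ → ℝ}
    (hF : StrictMonoOn F (Icc a b)) (ha : F a = 0) (hb : F b = 1) (hn : n ≠ 0)
    (hp : ∀ k ≤ n, p k ∈ Icc a b) (hstep : ∀ k < n, F (p (k + 1)) - F (p k) = 1 / n) :
    ∀ k ≤ n, F (p k) = k / n := by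
  have hshift : ∀ k ≤ n, F (p k) = F (p 0) + k / n := by
    intro k
    induction k with
    | zero => simp
    | succ k ih =>
      intro hk
      have := hstep k hk
      rw [ih (by omega)] at this
      push_cast
      linarith [add_div (k : ℝ) 1 n]
  have hp₀ := hp 0 (Nat.zero_le n)
  have hab : a ≤ b := hp₀.1.trans hp₀.2
  have hlo : 0 ≤ F (p 0) := ha ▸ hF.monotoneOn ⟨le_rfl, hab⟩ hp₀ hp₀.1
  have hhi : F (p n) ≤ 1 := hb ▸ hF.monotoneOn (hp n le_rfl) ⟨hab, le_rfl⟩ (hp n le_rfl).2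
  rw [hshift n le_rfl, div_self (Nat.cast_ne_zero.2 hn)] at hhi
  intro k hk
  rw [hshift k hk, le_antisymm (by linarith) hlo, zero_add]

theorem exists_pos_forall_sub_lt_of_strictMonoOn {f : ℝ → ℝ} {a b ε : ℝ}
    (hf : ContinuousOn f (Icc a b)) (hmono : StrictMonoOn f (Icc a b)) (hε : 0 < ε) :
    ∃ δ > 0, ∀ u ∈ Icc a b, ∀ v ∈ Icc a b, f v - f u < δ → v - u < ε := by
  -- `δ` is the minimum of `f v - f u` over the compact set of pairs with `v - u ≥ ε`.
  set S := {p ∈ Icc a b ×ˢ Icc a b | p.1 + ε ≤ p.2}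
  have hS : IsCompact S := (isCompact_Icc.prod isCompact_Icc).inter_right
    (isClosed_le (continuous_fst.add continuous_const) continuous_snd)
  rcases S.eq_empty_or_nonempty with hSe | hSne
  · refine ⟨1, one_pos, fun u hu v hv _ => ?_⟩
    by_contra! h
    exact hSe.subset (show (u, v) ∈ S from ⟨⟨hu, hv⟩, by linarith⟩)
  · have hcont : ContinuousOn (fun p : ℝ × ℝ => f p.2 - f p.1) S :=
      ((hf.comp continuousOn_snd fun p hp => hp.1.2).sub
        (hf.comp continuousOn_fst fun p hp => hp.1.1))
    obtain ⟨p₀, hp₀, hmin⟩ := hS.exists_isMinOn hSne hcont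
    refine ⟨f p₀.2 - f p₀.1, sub_pos.2 (hmono hp₀.1.1 hp₀.1.2 (by linarith [hp₀.2])),
      fun u hu v hv huv => ?_⟩
    by_contra! h
    exact (hmin (show (u, v) ∈ S from ⟨⟨hu, hv⟩, by linarith⟩)).not_gt huv

theorem hasDerivAt_of_hasStrictDerivAt_comp {f g h : ℝ → ℝ} {f' h' z : ℝ}
    (hf : HasStrictDerivAt f f' (g z)) (hf' : f' ≠ 0) (hg : ContinuousAt g z)
    (hh : HasDerivAt h h' z) (hfg : ∀ᶠ t in 𝓝 z, f (g t) = h t) :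
    HasDerivAt g (h' / f') z := by
  have hinv := hf.to_localInverse hf'
  rw [hfg.self_of_nhds] at hinv
  have hloc : (hf.localInverse f f' (g z) hf' ∘ h) =ᶠ[𝓝 z] g := by
    filter_upwards [hg.eventually (hf.eventually_left_inverse hf'), hfg] with t ht hft
    rw [Function.comp_apply, ← hft, ht]
  rw [div_eq_inv_mul]
  exact (hinv.hasDerivAt.comp z hh).congr_of_eventuallyEq hloc.symm

theorem partition_of_integral_Ioo_eq {φ : ℝ → ℝ} {a b : ℝ} {n : ℕ} {p : ℕ → ℝ}
    (hi : Integrable φ) (h1 : ∫ x, φ x = 1) (hpos : ∀ t ∈ Ioo a b, 0 < φ t)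
    (hzero : ∀ t ∉ Ioo a b, φ t = 0) (hn : n ≠ 0) (hp : ∀ k ≤ n, p k ∈ Icc a b)
    (hmono : ∀ k < n, p k ≤ p (k + 1))
    (hstep : ∀ k < n, ∫ t in Ioo (p k) (p (k + 1)), φ t = 1 / n) :
    p 0 = a ∧ p n = b ∧ ∀ k ≤ n, cdfOf φ (p k) = k / n := by
  have hF := strictMonoOn_cdfOf hi hpos
  have ha : cdfOf φ a = 0 := cdfOf_eq_zero fun t ht => hzero t fun h => ht.not_gt h.1
  have hb : cdfOf φ b = 1 := cdfOf_eq_one hi h1 fun t ht => hzero t fun h => ht.not_gt h.2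
  have hval := apply_partition_eq hF ha hb hn hp fun k hk => by
    rw [cdfOf_sub_cdfOf_eq_integral_Ioo hi (hmono k hk), hstep k hk]
  have hab : a ≤ b := (hp 0 (Nat.zero_le n)).1.trans (hp 0 (Nat.zero_le n)).2
  refine ⟨hF.injOn (hp 0 (Nat.zero_le n)) ⟨le_rfl, hab⟩ ?_,
    hF.injOn (hp n le_rfl) ⟨hab, le_rfl⟩ ?_, hval⟩
  · rw [hval 0 (Nat.zero_le n), ha, Nat.cast_zero, zero_div]
  · rw [hval n le_rfl, hb, div_self (Nat.cast_ne_zero.2 hn)]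

section changeOfVariables

variable {q K K' : ℝ → ℝ} {a b : ℝ}

theorem hasDerivAt_integral_comp {c t : ℝ} (hq : Continuous q) (hK : HasDerivAt K (K' t) t) :
    HasDerivAt (fun s => ∫ y in c..K s, q y) (K' t * q (K t)) t :=
  ((hq.integral_hasStrictDerivAt c (K t)).hasDerivAt.comp t hK).congr_deriv (mul_comm _ _)

theorem continuousOn_integral_comp {c : ℝ} {s : Set ℝ} (hq : Continuous q)
    (hK : ContinuousOn K s) : ContinuousOn (fun t => ∫ y in c..K t, q y) s :=
  (intervalIntegral.continuous_primitive (μ := volume) (fun _ _ => hq.intervalIntegrable _ _)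
    c).comp_continuousOn hK

theorem intervalIntegrable_deriv_mul_comp_of_nonneg (hab : a ≤ b) (hq : Continuous q)
    (hqnn : ∀ y, 0 ≤ q y) (hK : ContinuousOn K (Icc a b))
    (hK' : ∀ t ∈ Ioo a b, HasDerivAt K (K' t) t) (hK'nn : ∀ t ∈ Ioo a b, 0 ≤ K' t) :
    IntervalIntegrable (fun t => K' t * q (K t)) volume a b := by
  rw [intervalIntegrable_iff_integrableOn_Ioc_of_le hab]
  exact intervalIntegral.integrableOn_deriv_of_nonneg (continuousOn_integral_comp (c := 0) hq hK)
    (fun t ht => hasDerivAt_integral_comp hq (hK' t ht))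
    (fun t ht => mul_nonneg (hK'nn t ht) (hqnn _))

theorem integral_deriv_mul_comp_of_nonneg (hab : a ≤ b) (hq : Continuous q)
    (hqnn : ∀ y, 0 ≤ q y) (hK : ContinuousOn K (Icc a b))
    (hK' : ∀ t ∈ Ioo a b, HasDerivAt K (K' t) t) (hK'nn : ∀ t ∈ Ioo a b, 0 ≤ K' t) :
    ∫ t in a..b, K' t * q (K t) = ∫ y in Ioo (K a) (K b), q y := by
  have hmono : MonotoneOn K (Icc a b) :=
    monotoneOn_of_hasDerivWithinAt_nonneg (convex_Icc a b) hK
      (fun t ht => (hK' t (by rwa [interior_Icc] at ht)).hasDerivWithinAt)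
      (fun t ht => hK'nn t (by rwa [interior_Icc] at ht))
  rw [intervalIntegral.integral_eq_sub_of_hasDerivAt_of_le hab
      (continuousOn_integral_comp (c := K a) hq hK)
      (fun t ht => hasDerivAt_integral_comp hq (hK' t ht))
      (intervalIntegrable_deriv_mul_comp_of_nonneg hab hq hqnn hK hK' hK'nn),
    intervalIntegral.integral_same, sub_zero,
    intervalIntegral.integral_of_le (hmono ⟨le_rfl, hab⟩ ⟨hab, le_rfl⟩ hab),
    integral_Ioc_eq_integral_Ioo]

end changeOfVariables

theorem abs_integral_midpoint_sub_mul_le {g : ℝ → ℝ} {u v δ : ℝ} (huv : u ≤ v)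
    (hδ : v - u ≤ δ) (hg : IntervalIntegrable g volume u v) (hgnn : ∀ t, 0 ≤ g t) :
    |∫ t in u..v, ((v + u) / 2 - t) * g t| ≤ δ * ∫ t in u..v, g t := by
  have hcont : ContinuousOn (fun t => (v + u) / 2 - t) (uIcc u v) := by fun_prop
  calc |∫ t in u..v, ((v + u) / 2 - t) * g t|
      ≤ ∫ t in u..v, |((v + u) / 2 - t) * g t| :=
        intervalIntegral.abs_integral_le_integral_abs huv
    _ ≤ ∫ t in u..v, δ * g t := by
        refine intervalIntegral.integral_mono_on huv (hg.continuousOn_mul hcont).abs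
          (hg.const_mul δ) fun t ht => ?_
        rw [abs_mul, abs_of_nonneg (hgnn t)]
        refine mul_le_mul_of_nonneg_right ?_ (hgnn t)
        rw [abs_le]
        constructor <;> linarith [ht.1, ht.2]
    _ = δ * ∫ t in u..v, g t := intervalIntegral.integral_const_mul δ g

theorem abs_sum_midpoint_mul_integral_sub_le {g : ℝ → ℝ} {p : ℕ → ℝ} {n : ℕ} {δ : ℝ}
    (hp : ∀ k < n, p k ≤ p (k + 1)) (hδ : ∀ k < n, p (k + 1) - p k ≤ δ)
    (hg : ∀ k < n, IntervalIntegrable g volume (p k) (p (k + 1))) (hgnn : ∀ t, 0 ≤ g t) :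
    |(∑ k ∈ Finset.range n, (p (k + 1) + p k) / 2 * ∫ t in p k..p (k + 1), g t)
        - ∫ t in p 0..p n, t * g t| ≤ δ * ∫ t in p 0..p n, g t := by
  have hmul : ∀ k < n, IntervalIntegrable (fun t => t * g t) volume (p k) (p (k + 1)) :=
    fun k hk => (hg k hk).continuousOn_mul continuousOn_id
  rw [← intervalIntegral.sum_integral_adjacent_intervals hmul,
    ← intervalIntegral.sum_integral_adjacent_intervals hg, Finset.mul_sum, ← Finset.sum_sub_distrib]
  have hcell : ∀ k ∈ Finset.range n,
      (p (k + 1) + p k) / 2 * (∫ t in p k..p (k + 1), g t) - ∫ t in p k..p (k + 1), t * g t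
        = ∫ t in p k..p (k + 1), ((p (k + 1) + p k) / 2 - t) * g t := by
    intro k hk
    rw [← intervalIntegral.integral_const_mul, ← intervalIntegral.integral_sub
      ((hg k (Finset.mem_range.1 hk)).const_mul _) (hmul k (Finset.mem_range.1 hk))]
    congr 1 with t
    ring
  rw [Finset.sum_congr rfl hcell]
  refine (Finset.abs_sum_le_sum_abs _ _).trans (Finset.sum_le_sum fun k hk => ?_)
  have hk := Finset.mem_range.1 hk
  exact abs_integral_midpoint_sub_mul_le (hp k hk) (hδ k hk) (hg k hk) hgnn

theorem hasDerivAt_of_cdfOf_comp_eq {φ₁ φ₂ K : ℝ → ℝ} {s : Set ℝ} {z : ℝ}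
    (hφ₁c : Continuous φ₁) (hφ₂c : Continuous φ₂) (hφ₁i : Integrable φ₁) (hφ₂i : Integrable φ₂)
    (hs : s ∈ 𝓝 z) (hK : ∀ t ∈ s, cdfOf φ₂ (K t) = cdfOf φ₁ t) (hKc : ContinuousAt K z)
    (hz : φ₂ (K z) ≠ 0) : HasDerivAt K (φ₁ z / φ₂ (K z)) z :=
  hasDerivAt_of_hasStrictDerivAt_comp (hasStrictDerivAt_cdfOf hφ₂c hφ₂i (K z)) hz hKc
    (hasStrictDerivAt_cdfOf hφ₁c hφ₁i z).hasDerivAt (eventually_of_mem hs hK)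

theorem eventually_forall_sub_lt_of_apply_eq_div {F : ℝ → ℝ} {a b ε : ℝ} {p : ℕ → ℕ → ℝ}
    (hF : ContinuousOn F (Icc a b)) (hmono : StrictMonoOn F (Icc a b))
    (hmem : ∀ᶠ n in atTop, ∀ k ≤ n, p n k ∈ Icc a b)
    (hval : ∀ᶠ n in atTop, ∀ k ≤ n, F (p n k) = k / n) (hε : 0 < ε) :
    ∀ᶠ n in atTop, ∀ k < n, p n (k + 1) - p n k < ε := by
  obtain ⟨δ, hδ, hsub⟩ := exists_pos_forall_sub_lt_of_strictMonoOn hF hmono hε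
  filter_upwards [hmem, hval, tendsto_one_div_atTop_nhds_zero_nat.eventually (gt_mem_nhds hδ)]
    with n hmem hval hn k hk
  refine hsub _ (hmem k hk.le) _ (hmem (k + 1) hk) ?_
  rw [hval k hk.le, hval (k + 1) hk]
  calc ((k + 1 : ℕ) : ℝ) / n - k / n = 1 / n := by push_cast; ring
    _ < δ := hn

theorem tendsto_sum_midpoint_mul_integral {g : ℝ → ℝ} {a b : ℝ} {p : ℕ → ℕ → ℝ}
    (hg : IntervalIntegrable g volume a b) (hgnn : ∀ t, 0 ≤ g t)
    (hp₀ : ∀ᶠ n in atTop, p n 0 = a) (hpₙ : ∀ᶠ n in atTop, p n n = b)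
    (hmem : ∀ᶠ n in atTop, ∀ k ≤ n, p n k ∈ Icc a b)
    (hmono : ∀ᶠ n in atTop, ∀ k < n, p n k ≤ p n (k + 1))
    (hmesh : ∀ ε > 0, ∀ᶠ n in atTop, ∀ k < n, p n (k + 1) - p n k < ε) :
    Tendsto (fun n => ∑ k ∈ Finset.range n,
        (p n (k + 1) + p n k) / 2 * ∫ t in p n k..p n (k + 1), g t)
      atTop (𝓝 (∫ t in a..b, t * g t)) := by
  refine Metric.tendsto_nhds.2 fun ε hε => ?_
  set I := ∫ t in a..b, g t
  have hδ : 0 < ε / (|I| + 1) := by positivity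
  filter_upwards [hp₀, hpₙ, hmem, hmono, hmesh _ hδ] with n hp₀ hpₙ hmem hmono hmesh
  have hcell : ∀ k < n, IntervalIntegrable g volume (p n k) (p n (k + 1)) := fun k hk =>
    hg.mono_set (uIcc_subset_uIcc (Icc_subset_uIcc (hmem k hk.le))
      (Icc_subset_uIcc (hmem (k + 1) hk)))
  have hbound := abs_sum_midpoint_mul_integral_sub_le hmono (fun k hk => (hmesh k hk).le)
    hcell hgnn
  rw [hp₀, hpₙ] at hbound
  rw [Real.dist_eq]
  calc _ ≤ ε / (|I| + 1) * I := hbound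
    _ ≤ ε / (|I| + 1) * |I| := mul_le_mul_of_nonneg_left (le_abs_self I) hδ.le
    _ < ε := by
      rw [div_mul_eq_mul_div, div_lt_iff₀ (by positivity)]
      nlinarith [abs_nonneg I]

theorem stmt3_general
    (φ₁ φ₂ q : ℝ → ℝ) (I₁ I₂ : Set ℝ)
    (hφ₁c : Continuous φ₁) (hφ₂c : Continuous φ₂)
    (hφ₁nn : ∀ x, 0 ≤ φ₁ x) (hφ₂nn : ∀ x, 0 ≤ φ₂ x)
    (hφ₁i : Integrable φ₁) (hφ₂i : Integrable φ₂)
    (hφ₁1 : ∫ x, φ₁ x = 1)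
    (hI₁o : IsOpen I₁) (hI₁conn : I₁.OrdConnected)
    (hpos₁ : ∀ x, 0 < φ₁ x ↔ x ∈ I₁)
    (hpos₂ : ∀ x, 0 < φ₂ x ↔ x ∈ I₂)
    (hI₁bdd : Bornology.IsBounded I₁)
    (hqnn : ∀ y, 0 ≤ q y) (hquc : UniformContinuous q)
    (K : ℝ → ℝ)
    (hK : ∀ z ∈ I₁, K z ∈ I₂ ∧ cdfOf φ₂ (K z) = cdfOf φ₁ z)
    (hKc : ContinuousOn K (closure I₁))
    (x : ℕ → ℕ → ℝ)
    (hxmem : ∀ n, 1 ≤ n → ∀ k ≤ n, x n k ∈ closure I₁)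
    (hxmono : ∀ n, 1 ≤ n → ∀ j ≤ n, ∀ k ≤ n, j < k → x n j < x n k)
    (hxpart : ∀ n, 1 ≤ n → ∀ k < n, ∫ t in Set.Ioo (x n k) (x n (k+1)), φ₁ t = 1 / n) :
    Tendsto
      (fun n : ℕ => ∑ k ∈ Finset.range n,
        ((x n (k+1) + x n k) / 2) * ∫ y in Set.Ioo (K (x n k)) (K (x n (k+1))), q y)
      atTop
      (nhds (∫ z in I₁, z * (φ₁ z / φ₂ (K z)) * q (K z))) := by
  obtain ⟨A, B, hAB, rfl⟩ := exists_eq_Ioo_of_pos_iff hφ₁nn hφ₁1 hpos₁ hI₁o hI₁conn hI₁bdd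
  rw [closure_Ioo hAB.ne] at hKc hxmem
  have hpos : ∀ t ∈ Ioo A B, 0 < φ₁ t := fun t ht => (hpos₁ t).2 ht
  have hxstep : ∀ n, 1 ≤ n → ∀ k < n, x n k ≤ x n (k + 1) := fun n hn k hk =>
    (hxmono n hn k hk.le (k + 1) hk k.lt_succ_self).le
  have hpart : ∀ᶠ n in atTop, x n 0 = A ∧ x n n = B ∧ ∀ k ≤ n, cdfOf φ₁ (x n k) = k / n := by
    filter_upwards [eventually_ge_atTop 1] with n hn
    exact partition_of_integral_Ioo_eq hφ₁i hφ₁1 hpos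
      (fun t ht => le_antisymm (not_lt.1 (mt (hpos₁ t).1 ht)) (hφ₁nn t)) (by omega)
      (hxmem n hn) (hxstep n hn) (hxpart n hn)
  have hKd : ∀ z ∈ Ioo A B, HasDerivAt K (φ₁ z / φ₂ (K z)) z := fun z hz =>
    hasDerivAt_of_cdfOf_comp_eq hφ₁c hφ₂c hφ₁i hφ₂i (isOpen_Ioo.mem_nhds hz)
      (fun t ht => (hK t ht).2) (hKc.continuousAt (Icc_mem_nhds hz.1 hz.2))
      ((hpos₂ _).2 (hK z hz).1).ne'
  have hK'nn : ∀ z, 0 ≤ φ₁ z / φ₂ (K z) := fun z => div_nonneg (hφ₁nn z) (hφ₂nn _)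
  have hcov : ∀ u ∈ Icc A B, ∀ v ∈ Icc A B, u ≤ v →
      ∫ y in Ioo (K u) (K v), q y = ∫ t in u..v, φ₁ t / φ₂ (K t) * q (K t) :=
    fun u hu v hv huv => (integral_deriv_mul_comp_of_nonneg huv hquc.continuous hqnn
      (hKc.mono (Icc_subset_Icc hu.1 hv.2)) (fun t ht => hKd t (Ioo_subset_Ioo hu.1 hv.2 ht))
      fun t _ => hK'nn t).symm
  have hlim := tendsto_sum_midpoint_mul_integral (p := x)
    (intervalIntegrable_deriv_mul_comp_of_nonneg hAB.le hquc.continuous hqnn hKc hKd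
      fun t _ => hK'nn t)
    (fun t => mul_nonneg (hK'nn t) (hqnn _)) (hpart.mono fun n h => h.1)
    (hpart.mono fun n h => h.2.1) (eventually_atTop.2 ⟨1, hxmem⟩)
    (eventually_atTop.2 ⟨1, hxstep⟩) fun ε hε =>
      eventually_forall_sub_lt_of_apply_eq_div (continuous_cdfOf hφ₁c hφ₁i).continuousOn
        (strictMonoOn_cdfOf hφ₁i hpos) (eventually_atTop.2 ⟨1, hxmem⟩)
        (hpart.mono fun n h => h.2.2) hε
  simp only [← mul_assoc] at hlim
  rw [← integral_Ioc_eq_integral_Ioo, ← intervalIntegral.integral_of_le hAB.le]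
  refine hlim.congr' ?_
  filter_upwards [eventually_ge_atTop 1] with n hn
  refine Finset.sum_congr rfl fun k hk => ?_
  have hk := Finset.mem_range.1 hk
  rw [hcov _ (hxmem n hn k hk.le) _ (hxmem n hn (k + 1) hk) (hxstep n hn k hk)]

/-- convergence of the values of the approximating finite portfolios.
`I₁` is bounded, `q` is uniformly continuous, and for each `n ≥ 1` the points
`x n 0 < x n 1 < ⋯ < x n n` form the partition of the closure of `I₁` characterized by
`∫_{x n k}^{x n (k+1)} φ₁ = 1/n`.  With `y n k := K (x n k)`, the finite portfolio values
`Σ_k ((x n (k+1) + x n k)/2) ∫_{y n k}^{y n (k+1)} q` converge to the portfolio value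
`∫_{I₁} x (φ₁ x / φ₂ (K x)) q (K x) dx`. -/
theorem stmt3
    (φ₁ φ₂ q : ℝ → ℝ) (I₁ I₂ : Set ℝ)
    (hφ₁c : Continuous φ₁) (hφ₂c : Continuous φ₂)
    (hφ₁nn : ∀ x, 0 ≤ φ₁ x) (hφ₂nn : ∀ x, 0 ≤ φ₂ x)
    (hφ₁i : Integrable φ₁) (hφ₂i : Integrable φ₂)
    (hφ₁1 : ∫ x, φ₁ x = 1) (hφ₂1 : ∫ x, φ₂ x = 1)
    (hI₁o : IsOpen I₁) (hI₁conn : I₁.OrdConnected)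
    (hI₂o : IsOpen I₂) (hI₂conn : I₂.OrdConnected)
    (hpos₁ : ∀ x, 0 < φ₁ x ↔ x ∈ I₁)
    (hpos₂ : ∀ x, 0 < φ₂ x ↔ x ∈ I₂)
    (hI₁bdd : Bornology.IsBounded I₁)
    (hqnn : ∀ y, 0 ≤ q y) (hqi : Integrable q) (hquc : UniformContinuous q)
    (K : ℝ → ℝ)
    (hK : ∀ z ∈ I₁, K z ∈ I₂ ∧ cdfOf φ₂ (K z) = cdfOf φ₁ z)
    (hKc : ContinuousOn K (closure I₁))
    (hVint : IntegrableOn (fun z => z * (φ₁ z / φ₂ (K z)) * q (K z)) I₁)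
    (x : ℕ → ℕ → ℝ)
    (hxmem : ∀ n, 1 ≤ n → ∀ k ≤ n, x n k ∈ closure I₁)
    (hxmono : ∀ n, 1 ≤ n → ∀ j ≤ n, ∀ k ≤ n, j < k → x n j < x n k)
    (hxpart : ∀ n, 1 ≤ n → ∀ k < n, ∫ t in Set.Ioo (x n k) (x n (k+1)), φ₁ t = 1 / n) :
    Tendsto
      (fun n : ℕ => ∑ k ∈ Finset.range n,
        ((x n (k+1) + x n k) / 2) * ∫ y in Set.Ioo (K (x n k)) (K (x n (k+1))), q y)
      atTop
      (nhds (∫ z in I₁, z * (φ₁ z / φ₂ (K z)) * q (K z))) :=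
  stmt3_general φ₁ φ₂ q I₁ I₂ hφ₁c hφ₂c hφ₁nn hφ₂nn hφ₁i hφ₂i hφ₁1 hI₁o hI₁conn hpos₁ hpos₂ hI₁bdd
    hqnn hquc K hK hKc x hxmem hxmono hxpart
end

section
/- Breeden–Litzenberger formula: let Q be a Borel probability measure on ℝ with finite first moment that has a continuous density g with respect to Lebesgue measure, let B > 0, and define C(K) := B · ∫ (x − K)⁺ dQ(x). Then C is twice differentiable at every K ∈ ℝ and C''(K) = B · g(K); that is, the state-price density is recovered as the second derivative of the call price with respect to the strike. -/
open MeasureTheory Set Filter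

/-! Differentiating under the integral sign (the payoff `K ↦ (x - K)⁺` is 1-Lipschitz with
derivative `-𝟙{x > K}` off the single point `x = K`, which `Q` does not charge) gives
`C'(K) = -B · Q(K, ∞) = -B ∫_K^∞ g`, and the fundamental theorem of calculus then gives
`C''(K) = B · g(K)`. -/

theorem lipschitzWith_call_payoff (x : ℝ) : LipschitzWith 1 fun K : ℝ => max (x - K) 0 :=
  (IsometryEquiv.subLeft x).isometry.lipschitz.max_const 0

theorem hasDerivAt_call_payoff {x K : ℝ} (hx : x ≠ K) :
    HasDerivAt (fun K : ℝ => max (x - K) 0) (-(Ioi K).indicator 1 x) K := by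
  rcases hx.lt_or_gt with hlt | hgt
  · have hzero : (fun K : ℝ => max (x - K) 0) =ᶠ[nhds K] fun _ => 0 := by
      filter_upwards [eventually_gt_nhds hlt] with K' hK'
      exact max_eq_right (by linarith)
    simpa [indicator_of_notMem (notMem_Ioi.2 hlt.le)] using
      (hasDerivAt_const K (0 : ℝ)).congr_of_eventuallyEq hzero
  · have hlin : (fun K : ℝ => max (x - K) 0) =ᶠ[nhds K] fun K => x - K := by
      filter_upwards [eventually_lt_nhds hgt] with K' hK'
      exact max_eq_left (by linarith)
    simpa [indicator_of_mem (mem_Ioi.2 hgt)] using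
      ((hasDerivAt_id K).const_sub x).congr_of_eventuallyEq hlin

theorem integrable_call_payoff {μ : Measure ℝ} [IsFiniteMeasure μ]
    (hμ : Integrable (fun x : ℝ => |x|) μ) (K : ℝ) :
    Integrable (fun x => max (x - K) 0) μ := by
  have hid : Integrable (fun x : ℝ => x) μ :=
    (integrable_norm_iff aestronglyMeasurable_id).1 hμ
  exact (hid.sub (integrable_const K)).pos_part

theorem hasDerivAt_integral_call_payoff {μ : Measure ℝ} [IsFiniteMeasure μ] {K : ℝ}
    (hint : Integrable (fun x => max (x - K) 0) μ) (hK : μ {K} = 0) :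
    HasDerivAt (fun K => ∫ x, max (x - K) 0 ∂μ) (-μ.real (Ioi K)) K := by
  have hcont : ∀ K : ℝ, Continuous fun x : ℝ => max (x - K) 0 := fun K =>
    (continuous_id.sub continuous_const).max continuous_const
  have hne : ∀ᵐ x ∂μ, x ≠ K := measure_eq_zero_iff_ae_notMem.1 hK
  have key := hasDerivAt_integral_of_dominated_loc_of_lip (μ := μ) (s := univ)
    (F' := fun x => -(Ioi K).indicator 1 x) (bound := fun _ => 1) univ_mem
    (Eventually.of_forall fun K => (hcont K).aestronglyMeasurable) hint
    ((measurable_const.indicator measurableSet_Ioi).aestronglyMeasurable.neg)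
    (ae_of_all _ fun x => by simpa using lipschitzWith_call_payoff x)
    (integrable_const 1) (hne.mono fun x hx => hasDerivAt_call_payoff hx)
  simpa [integral_neg, integral_indicator_one measurableSet_Ioi] using key.2

theorem measureReal_withDensity_ofReal {α : Type*} [MeasurableSpace α] {μ : Measure α}
    {f : α → ℝ} {s : Set α} (hs : MeasurableSet s) (hf : IntegrableOn f s μ)
    (hnn : 0 ≤ᵐ[μ.restrict s] f) :
    (μ.withDensity fun x => ENNReal.ofReal (f x)).real s = ∫ x in s, f x ∂μ := by
  rw [measureReal_def, withDensity_apply _ hs, ← ofReal_integral_eq_lintegral_ofReal hf hnn,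
    ENNReal.toReal_ofReal (integral_nonneg_of_ae hnn)]

theorem hasDerivAt_integral_Ioi {g : ℝ → ℝ} (hg : Integrable g) {K : ℝ} (hK : ContinuousAt g K) :
    HasDerivAt (fun K => ∫ x in Ioi K, g x) (-g K) K := by
  have hsplit : (fun K => ∫ x in Ioi K, g x)
      = fun K => ((∫ x, g x) - ∫ x in Iic 0, g x) - ∫ x in 0..K, g x := by
    funext K
    rw [← intervalIntegral.integral_Iic_sub_Iic hg.integrableOn hg.integrableOn, ← compl_Iic,
      ← integral_add_compl measurableSet_Iic hg]
    ring
  rw [hsplit]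
  exact (intervalIntegral.integral_hasDerivAt_right hg.intervalIntegrable
    hg.aestronglyMeasurable.stronglyMeasurableAtFilter hK).const_sub _

theorem stmt15_general
    (g : ℝ → ℝ) (hgc : Continuous g) (hgnn : ∀ x, 0 ≤ g x)
    (hgi : Integrable g)
    (Q : Measure ℝ)
    (hQ : Q = volume.withDensity (fun x => ENNReal.ofReal (g x)))
    (hmom : Integrable (fun x : ℝ => |x|) Q)
    (B : ℝ)
    (C : ℝ → ℝ) (hC : ∀ K : ℝ, C K = B * ∫ x, max (x - K) 0 ∂Q) :
    (∀ K : ℝ, DifferentiableAt ℝ C K) ∧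
      (∀ K : ℝ, HasDerivAt (deriv C) (B * g K) K) := by
  subst hQ
  have := isFiniteMeasure_withDensity_ofReal hgi.2
  have hatom (K : ℝ) : volume.withDensity (fun x => ENNReal.ofReal (g x)) {K} = 0 :=
    withDensity_absolutelyContinuous _ _ Real.volume_singleton
  have hC' (K : ℝ) : HasDerivAt C (B * -∫ x in Ioi K, g x) K := by
    rw [funext hC, ← measureReal_withDensity_ofReal measurableSet_Ioi hgi.integrableOn
      (ae_of_all _ hgnn)]
    exact (hasDerivAt_integral_call_payoff (integrable_call_payoff hmom K) (hatom K)).const_mul B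
  refine ⟨fun K => (hC' K).differentiableAt, fun K => ?_⟩
  rw [funext fun K => (hC' K).deriv]
  simpa using ((hasDerivAt_integral_Ioi hgi hgc.continuousAt).neg.const_mul B)

/-- Breeden–Litzenberger formula: if the Borel probability measure `Q` on
`ℝ` has finite first moment and a continuous Lebesgue density `g`, and `B > 0`, then the
call price `C(K) = B · ∫ (x − K)⁺ dQ(x)` is twice differentiable at every `K` with
`C''(K) = B · g(K)`: the state-price density is the second strike-derivative of the call
price. -/
theorem stmt15
    (g : ℝ → ℝ) (hgc : Continuous g) (hgnn : ∀ x, 0 ≤ g x)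
    (hgi : Integrable g) (hg1 : ∫ x, g x = 1)
    (Q : Measure ℝ)
    (hQ : Q = volume.withDensity (fun x => ENNReal.ofReal (g x)))
    (hmom : Integrable (fun x : ℝ => |x|) Q)
    (B : ℝ) (hB : 0 < B)
    (C : ℝ → ℝ) (hC : ∀ K : ℝ, C K = B * ∫ x, max (x - K) 0 ∂Q) :
    (∀ K : ℝ, DifferentiableAt ℝ C K) ∧
      (∀ K : ℝ, HasDerivAt (deriv C) (B * g K) K) :=
  stmt15_general g hgc hgnn hgi Q hQ hmom B C hC
end

section
/- Default risk detection: let Q be a Borel probability measure on [0, ∞) with finite first moment that is atomless on (0, ∞) but may have an atom at 0, let B > 0, and define C(K) := B · ∫ (x − K)⁺ dQ(x) for K > 0. Then C is differentiable on (0, ∞) with C'(K) = −B · Q((K, ∞)), and lim_{K → 0⁺} C'(K) = −B · (1 − Q({0})); equivalently, the risk-neutral default probability is recovered as B · Q({0}) = B + lim_{K → 0⁺} C'(K). -/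
open MeasureTheory Set Filter

/-! Since `k ↦ (x - k)⁺` is 1-Lipschitz with derivative `-1_{x > k}` away from `k = x`,
dominated differentiation gives `C'(K) = -B · Q((K, ∞))` wherever `Q` has no atom at `K`.
As `K ↓ 0` the sets `(K, ∞)` increase to `(0, ∞)`, whose mass is `1 - Q {0}` because `Q` lives
on `[0, ∞)`. -/

theorem hasDerivAt_max_const_sub_zero {x K : ℝ} (hx : x ≠ K) :
    HasDerivAt (fun k => max (x - k) 0) ((Ioi K).indicator (fun _ => -1) x) K := by
  rcases hx.lt_or_gt with hlt | hgt
  · have hzero : (fun k => max (x - k) 0) =ᶠ[nhds K] fun _ => 0 := by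
      filter_upwards [Ioi_mem_nhds hlt] with k hk
      exact max_eq_right (by linarith [mem_Ioi.1 hk])
    simpa [indicator_of_notMem (notMem_Ioi.2 hlt.le)] using
      (hasDerivAt_const K (0 : ℝ)).congr_of_eventuallyEq hzero
  · have hsub : (fun k => max (x - k) 0) =ᶠ[nhds K] fun k => x - k := by
      filter_upwards [Iio_mem_nhds hgt] with k hk
      exact max_eq_left (by linarith [mem_Iio.1 hk])
    simpa [indicator_of_mem (mem_Ioi.2 hgt)] using
      ((hasDerivAt_id K).const_sub x).congr_of_eventuallyEq hsub

theorem lipschitzWith_max_const_sub_zero (x : ℝ) :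
    LipschitzWith 1 (fun k : ℝ => max (x - k) 0) := by
  simpa using ((LipschitzWith.const x).sub LipschitzWith.id).max_const 0

theorem hasDerivAt_integral_max_sub_zero {μ : Measure ℝ} [IsFiniteMeasure μ]
    (hμ : Integrable id μ) {K : ℝ} (hK : μ {K} = 0) :
    HasDerivAt (fun k => ∫ x, max (x - k) 0 ∂μ) (-μ.real (Ioi K)) K := by
  have hcont : ∀ k : ℝ, Continuous fun x : ℝ => max (x - k) 0 := fun k => by fun_prop
  have hdiff : ∀ᵐ x ∂μ, HasDerivAt (fun k => max (x - k) 0)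
      ((Ioi K).indicator (fun _ => -1) x) K := by
    filter_upwards [measure_eq_zero_iff_ae_notMem.1 hK] with x hx
    exact hasDerivAt_max_const_sub_zero hx
  have h := (hasDerivAt_integral_of_dominated_loc_of_lip (bound := fun _ => 1) univ_mem
    (Eventually.of_forall fun k => (hcont k).aestronglyMeasurable)
    (hμ.sub (integrable_const K)).pos_part
    ((measurable_const.indicator measurableSet_Ioi).aestronglyMeasurable)
    (ae_of_all _ fun x => by simpa using lipschitzWith_max_const_sub_zero x)
    (integrable_const 1) hdiff).2
  rwa [integral_indicator_const _ measurableSet_Ioi, smul_neg, smul_eq_mul, mul_one] at h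

theorem tendsto_measureReal_Ioi_nhdsGT (μ : Measure ℝ) [IsProbabilityMeasure μ] (a : ℝ) :
    Tendsto (fun K => μ.real (Ioi K)) (nhdsWithin a (Ioi a)) (nhds (μ.real (Ioi a))) := by
  simp_rw [← compl_Iic, probReal_compl_eq_one_sub measurableSet_Iic,
    ← ProbabilityTheory.cdf_eq_real, compl_Iic]
  exact (((ProbabilityTheory.cdf μ).right_continuous a).mono Ioi_subset_Ici_self).tendsto
    |>.const_sub 1

theorem measureReal_Ioi_eq_one_sub_of_measure_Iio_eq_zero {μ : Measure ℝ}
    [IsProbabilityMeasure μ] {a : ℝ} (ha : μ (Iio a) = 0) :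
    μ.real (Ioi a) = 1 - μ.real {a} := by
  rw [← compl_Iic, probReal_compl_eq_one_sub measurableSet_Iic, ← Iio_union_right,
    measureReal_union (by simp) (measurableSet_singleton a), measureReal_def, ha,
    ENNReal.toReal_zero, zero_add]

theorem stmt16_general
    (Q : Measure ℝ) [IsProbabilityMeasure Q]
    (hsupp : Q (Set.Iio 0) = 0)
    (hatomless : ∀ x : ℝ, 0 < x → Q {x} = 0)
    (hmom : Integrable (fun x : ℝ => |x|) Q)
    (B : ℝ)
    (C : ℝ → ℝ) (hC : ∀ K : ℝ, 0 < K → C K = B * ∫ x, max (x - K) 0 ∂Q) :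
    (∀ K : ℝ, 0 < K → HasDerivAt C (-(B * (Q (Set.Ioi K)).toReal)) K) ∧
      Tendsto (deriv C) (nhdsWithin 0 (Set.Ioi 0))
        (nhds (-(B * (1 - (Q {0}).toReal)))) ∧
      Tendsto (fun K => B + deriv C K) (nhdsWithin 0 (Set.Ioi 0))
        (nhds (B * (Q {0}).toReal)) := by
  have hid : Integrable id Q := (integrable_norm_iff aestronglyMeasurable_id).1 hmom
  have hderiv : ∀ K : ℝ, 0 < K → HasDerivAt C (-(B * (Q (Set.Ioi K)).toReal)) K := by
    intro K hK
    have hCK : C =ᶠ[nhds K] fun k => B * ∫ x, max (x - k) 0 ∂Q :=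
      eventually_of_mem (Ioi_mem_nhds hK) hC
    have hd := (hasDerivAt_integral_max_sub_zero hid (hatomless K hK)).const_mul B
    simpa [measureReal_def] using hd.congr_of_eventuallyEq hCK
  have hlim : Tendsto (deriv C) (nhdsWithin 0 (Set.Ioi 0))
      (nhds (-(B * (1 - (Q {0}).toReal)))) := by
    have hdC : (fun K => -(B * Q.real (Ioi K))) =ᶠ[nhdsWithin 0 (Ioi 0)] deriv C :=
      eventually_nhdsWithin_of_forall fun K hK => (hderiv K hK).deriv.symm
    rw [← measureReal_def, ← measureReal_Ioi_eq_one_sub_of_measure_Iio_eq_zero hsupp]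
    exact (((tendsto_measureReal_Ioi_nhdsGT Q 0).const_mul B).neg).congr' hdC
  refine ⟨hderiv, hlim, ?_⟩
  convert hlim.const_add B using 2
  ring

/-- Default risk detection: let `Q` be a Borel probability measure
concentrated on `[0,∞)` with finite first moment, atomless on `(0,∞)` but possibly with
an atom at `0`, and `B > 0`.  The call price `C(K) = B · ∫ (x − K)⁺ dQ(x)` is
differentiable on `(0,∞)` with `C'(K) = −B · Q((K,∞))`, and
`lim_{K→0⁺} C'(K) = −B·(1 − Q({0}))`; equivalently the risk-neutral default probability
is recovered as `B · Q({0}) = B + lim_{K→0⁺} C'(K)`. -/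
theorem stmt16
    (Q : Measure ℝ) [IsProbabilityMeasure Q]
    (hsupp : Q (Set.Iio 0) = 0)
    (hatomless : ∀ x : ℝ, 0 < x → Q {x} = 0)
    (hmom : Integrable (fun x : ℝ => |x|) Q)
    (B : ℝ) (hB : 0 < B)
    (C : ℝ → ℝ) (hC : ∀ K : ℝ, 0 < K → C K = B * ∫ x, max (x - K) 0 ∂Q) :
    (∀ K : ℝ, 0 < K → HasDerivAt C (-(B * (Q (Set.Ioi K)).toReal)) K) ∧
      Tendsto (deriv C) (nhdsWithin 0 (Set.Ioi 0))
        (nhds (-(B * (1 - (Q {0}).toReal)))) ∧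
      Tendsto (fun K => B + deriv C K) (nhdsWithin 0 (Set.Ioi 0))
        (nhds (B * (Q {0}).toReal)) :=
  stmt16_general Q hsupp hatomless hmom B C hC
end
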